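/- Fix d ∈ ℝ. Let I ⊆ ℝ be an open interval and F₂, F₃ : I → ℝ be C² functions such that F₃ and F₃′ vanish nowhere on I and such that F₂′(z) + z·F₃′(z) + d·F₃(z) = 0 and 2F₃(z)F₃″(z) − 3(F₃′(z))² = 0 hold on I. Then there exist constants C₂, C₃, C₄ with C₄ ≠ 0 and z + C₃ ≠ 0 for all z ∈ I, such that F₃(z) = C₄/(z+C₃)² and F₂(z) = C₃C₄/(z+C₃)² − (2−d)C₄/(z+C₃) + C₂ on I. -/

import Mathlib

/-!
Since `(F₃ / F₃′)′ = 1 - F₃ F₃″ / F₃′² = -1/2` by the second equation, `F₃ / F₃′ = -(z + C₃)/2`,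
i.e. `(z + C₃) F₃′ = -2 F₃`, so `F₃ · (z + C₃)²` is a constant `C₄`. The first equation then
prescribes `F₂′` explicitly, and `F₂` is its antiderivative up to a constant `C₂`.
-/

theorem IsOpen.exists_eq_add_of_hasDerivAt {𝕜 G : Type*} [RCLike 𝕜] [NormedAddCommGroup G]
    [NormedSpace 𝕜 G] {s : Set 𝕜} (hs : IsOpen s) (hs' : IsPreconnected s) {f g f' : 𝕜 → G}
    (hf : ∀ x ∈ s, HasDerivAt f (f' x) x) (hg : ∀ x ∈ s, HasDerivAt g (f' x) x) :
    ∃ a, ∀ x ∈ s, f x = g x + a :=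
  hs.exists_eq_add_of_deriv_eq hs'
    (fun x hx => (hf x hx).differentiableAt.differentiableWithinAt)
    (fun x hx => (hg x hx).differentiableAt.differentiableWithinAt)
    (fun x hx => (hf x hx).deriv.trans (hg x hx).deriv.symm)

theorem ContDiffOn.hasDerivAt_deriv {n : WithTop ℕ∞} {s : Set ℝ} {f : ℝ → ℝ}
    (hf : ContDiffOn ℝ n f s) (hs : IsOpen s) (hn : n ≠ 0) {x : ℝ} (hx : x ∈ s) :
    HasDerivAt f (deriv f x) x :=
  ((hf.contDiffAt (hs.mem_nhds hx)).differentiableAt hn).hasDerivAt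

section Interval

variable {I : Set ℝ} (hIo : IsOpen I) (hIc : IsPreconnected I)
include hIo hIc

theorem exists_add_mul_deriv_eq_neg_two_mul {f : ℝ → ℝ} (hf : ContDiffOn ℝ 2 f I)
    (hf' : ∀ z ∈ I, deriv f z ≠ 0)
    (hode : ∀ z ∈ I, 2 * f z * deriv (deriv f) z - 3 * deriv f z ^ 2 = 0) :
    ∃ c, ∀ z ∈ I, (z + c) * deriv f z = -2 * f z := by
  have hdf : ∀ z ∈ I, HasDerivAt (deriv f) (deriv (deriv f) z) z := fun z hz =>
    (hf.deriv_of_isOpen hIo (by norm_num) : ContDiffOn ℝ 1 (deriv f) I).hasDerivAt_deriv hIo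
      one_ne_zero hz
  have hratio : ∀ z ∈ I, HasDerivAt (fun z => f z / deriv f z) (-1 / 2) z := by
    intro z hz
    refine ((hf.hasDerivAt_deriv hIo (by norm_num) hz).div (hdf z hz) (hf' z hz)).congr_deriv ?_
    field_simp [hf' z hz]
    linear_combination -hode z hz
  obtain ⟨a, ha⟩ := hIo.exists_eq_add_of_hasDerivAt hIc hratio
    (fun z _ => (hasDerivAt_id' z).fun_neg.div_const 2)
  refine ⟨-2 * a, fun z hz => ?_⟩
  have := ha z hz
  field_simp [hf' z hz] at this
  linear_combination this

theorem exists_eq_div_sq_of_add_mul_deriv_eq {f : ℝ → ℝ} {c : ℝ} (hf : DifferentiableOn ℝ f I)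
    (hf' : ∀ z ∈ I, (z + c) * deriv f z = -2 * f z) (hc : ∀ z ∈ I, z + c ≠ 0) :
    ∃ C, ∀ z ∈ I, f z = C / (z + c) ^ 2 := by
  have hconst : ∀ z ∈ I, HasDerivAt (fun z => f z * (z + c) ^ 2) 0 z := by
    intro z hz
    have hfz := (hf.differentiableAt (hIo.mem_nhds hz)).hasDerivAt
    refine (hfz.mul (((hasDerivAt_id' z).add_const c).fun_pow 2)).congr_deriv ?_
    linear_combination (z + c) * hf' z hz
  obtain ⟨C, hC⟩ := hIo.exists_eq_add_of_hasDerivAt hIc hconst (fun z _ => hasDerivAt_const z 0)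
  refine ⟨C, fun z hz => ?_⟩
  rw [eq_div_iff (pow_ne_zero 2 (hc z hz)), hC z hz, zero_add]

end Interval

theorem hasDerivAt_div_sq_sub_div (a b c z : ℝ) (hz : z + c ≠ 0) :
    HasDerivAt (fun z => a / (z + c) ^ 2 - b / (z + c))
      (-2 * a / (z + c) ^ 3 + b / (z + c) ^ 2) z := by
  have hlin : HasDerivAt (fun z => z + c) 1 z := (hasDerivAt_id' z).add_const c
  refine (((hasDerivAt_const z a).div (hlin.fun_pow 2) (pow_ne_zero 2 hz)).sub
    ((hasDerivAt_const z b).div hlin hz)).congr_deriv ?_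
  field_simp
  ring

/-- if `F₂, F₃` are C² on an open interval, `F₃` and `F₃′` vanish nowhere,
and `F₂′ + z F₃′ + d F₃ = 0`, `2 F₃ F₃″ − 3 (F₃′)² = 0` hold, then
`F₃(z) = C₄/(z+C₃)²` and `F₂(z) = C₃C₄/(z+C₃)² − (2−d)C₄/(z+C₃) + C₂` for some
constants `C₂, C₃, C₄` with `C₄ ≠ 0` and `z + C₃ ≠ 0` on the interval. -/
theorem stmt_9 (d : ℝ) (I : Set ℝ) (hIopen : IsOpen I) (hIconn : I.OrdConnected)
    (F₂ F₃ : ℝ → ℝ) (hF₂ : ContDiffOn ℝ 2 F₂ I) (hF₃ : ContDiffOn ℝ 2 F₃ I)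
    (hF₃ne : ∀ z ∈ I, F₃ z ≠ 0) (hF₃'ne : ∀ z ∈ I, deriv F₃ z ≠ 0)
    (heq1 : ∀ z ∈ I, deriv F₂ z + z * deriv F₃ z + d * F₃ z = 0)
    (heq2 : ∀ z ∈ I, 2 * F₃ z * deriv (deriv F₃) z - 3 * (deriv F₃ z) ^ 2 = 0) :
    ∃ C₂ C₃ C₄ : ℝ, C₄ ≠ 0 ∧ (∀ z ∈ I, z + C₃ ≠ 0) ∧
      ∀ z ∈ I,
        F₃ z = C₄ / (z + C₃) ^ 2 ∧
        F₂ z = C₃ * C₄ / (z + C₃) ^ 2 - (2 - d) * C₄ / (z + C₃) + C₂ := by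
  rcases I.eq_empty_or_nonempty with rfl | ⟨z₀, hz₀⟩
  · exact ⟨0, 0, 1, one_ne_zero, by simp, by simp⟩
  have hI := hIconn.isPreconnected
  obtain ⟨C₃, hF₃'⟩ := exists_add_mul_deriv_eq_neg_two_mul hIopen hI hF₃ hF₃'ne heq2
  have hzC₃ : ∀ z ∈ I, z + C₃ ≠ 0 := fun z hz h =>
    hF₃ne z hz (by linear_combination hF₃' z hz / 2 - deriv F₃ z * h / 2)
  obtain ⟨C₄, hF₃eq⟩ := exists_eq_div_sq_of_add_mul_deriv_eq hIopen hI
    (hF₃.differentiableOn (by norm_num)) hF₃' hzC₃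
  have hC₄ : C₄ ≠ 0 := by
    rintro rfl
    exact hF₃ne z₀ hz₀ (by simpa using hF₃eq z₀ hz₀)
  have hF₂' : ∀ z ∈ I, HasDerivAt F₂
      (-2 * (C₃ * C₄) / (z + C₃) ^ 3 + (2 - d) * C₄ / (z + C₃) ^ 2) z := by
    intro z hz
    refine (hF₂.hasDerivAt_deriv hIopen (by norm_num) hz).congr_deriv ?_
    have hz' := hzC₃ z hz
    have hP : F₃ z * (z + C₃) ^ 2 = C₄ := by rw [hF₃eq z hz, div_mul_cancel₀ _ (pow_ne_zero 2 hz')]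
    have hderiv : deriv F₃ z = -2 * C₄ / (z + C₃) ^ 3 := by
      rw [eq_div_iff (pow_ne_zero 3 hz')]
      linear_combination (z + C₃) ^ 2 * hF₃' z hz - 2 * hP
    have h1 := heq1 z hz
    rw [hderiv, hF₃eq z hz] at h1
    field_simp at h1 ⊢
    linear_combination h1
  obtain ⟨C₂, hF₂eq⟩ := hIopen.exists_eq_add_of_hasDerivAt hI hF₂'
    (fun z hz => hasDerivAt_div_sq_sub_div _ _ C₃ z (hzC₃ z hz))
  exact ⟨C₂, C₃, C₄, hC₄, hzC₃, fun z hz => ⟨hF₃eq z hz, hF₂eq z hz⟩⟩
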